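/- Let r be a natural number, s : {1,…,r} → ℂ, and define F(w) := Σ_{m : {1,…,r} → ℕ} ( ∏_{j=1}^{r} s_j^{m_j} / m_j! ) · Γ( w − Σ_{j=1}^{r} j·m_j ) for every complex w that is not an integer (the sum converges absolutely). Then for every complex z that is not an integer, F(z + 1) + Σ_{j=1}^{r} j·s_j·F(z − j) = z · F(z). -/

import Mathlib

/-!
Write `a m = (∏ j, s j ^ m j / (m j)!) Γ(z - N m)` with `N m = ∑ j, w j * m j` (here `w j = j + 1`).
The functional equation `Γ(u + 1) = u Γ(u)` gives `F(z + 1) = ∑ (z - N m) a m`, while the shift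
`m ↦ m + e_j` turns `w j s j F(z - w j)` into `∑ w j m j a m`; summing over `j` gives
`∑ N m a m`, cancelling that part of `F(z + 1)`. All series converge absolutely because `Γ(z - n)` is bounded in `n`
and the factor `N m + 1 ≤ 2 ^ N m` is absorbed into a product of exponential series.
-/

open Complex Finset

theorem summable_pi_prod_of_nonneg {ι : Type*} [Fintype ι] {t : ι → ℕ → ℝ}
    (ht : ∀ j k, 0 ≤ t j k) (hs : ∀ j, Summable (t j)) :
    Summable fun m : ι → ℕ => ∏ j, t j (m j) := by
  classical
  refine summable_of_sum_le (fun m => prod_nonneg fun j _ => ht j _)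
    (c := ∏ j, ∑' k, t j k) fun u => ?_
  -- `u` lies in the box spanned by its coordinate projections, over which the sum factorizes.
  calc ∑ m ∈ u, ∏ j, t j (m j)
      ≤ ∑ m ∈ Fintype.piFinset fun j => u.image (· j), ∏ j, t j (m j) :=
        sum_le_sum_of_subset_of_nonneg
          (fun m hm => Fintype.mem_piFinset.2 fun j => mem_image_of_mem _ hm)
          fun m _ _ => prod_nonneg fun j _ => ht j _
    _ = ∏ j, ∑ k ∈ u.image (· j), t j k := (prod_univ_sum _ _).symm
    _ ≤ ∏ j, ∑' k, t j k :=
        prod_le_prod (fun j _ => sum_nonneg fun k _ => ht j k)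
          fun j _ => (hs j).sum_le_tsum _ fun k _ => ht j k

theorem tsum_comp_add_single {ι α : Type*} [DecidableEq ι] [AddCommMonoid α] [TopologicalSpace α]
    (f : (ι → ℕ) → α) (j : ι) (hf : ∀ m, m j = 0 → f m = 0) :
    ∑' m, f (m + (Pi.single j 1 : ι → ℕ)) = ∑' m, f m := by
  refine (add_left_injective _).tsum_eq fun m hm => ⟨m - Pi.single j 1, tsub_add_cancel_of_le ?_⟩
  intro i
  rcases eq_or_ne i j with rfl | hij
  · simpa [Nat.one_le_iff_ne_zero] using mt (hf m) hm
  · simp [hij]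

theorem exists_norm_Gamma_sub_natCast_le (z : ℂ) : ∃ C, ∀ n : ℕ, ‖Gamma (z - n)‖ ≤ C := by
  set K := ⌈‖z‖⌉₊
  -- For `n ≥ ‖z‖` the factor in `Γ(z - n) = (z - (n + 1)) Γ(z - (n + 1))` has norm `≥ 1`.
  have hstep : ∀ n, K ≤ n → ‖Gamma (z - (n + 1 : ℕ))‖ ≤ ‖Gamma (z - n)‖ := by
    intro n hn
    have hlarge : 1 ≤ ‖z - (n + 1 : ℕ)‖ := by
      have h := norm_sub_norm_le ((n + 1 : ℕ) : ℂ) z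
      rw [norm_sub_rev, Complex.norm_natCast] at h
      have hzn := Nat.ceil_le.1 hn
      push_cast at h ⊢
      linarith
    have hne : z - (n + 1 : ℕ) ≠ 0 := norm_pos_iff.1 (one_pos.trans_le hlarge)
    calc ‖Gamma (z - (n + 1 : ℕ))‖ ≤ ‖z - (n + 1 : ℕ)‖ * ‖Gamma (z - (n + 1 : ℕ))‖ :=
          le_mul_of_one_le_left (norm_nonneg _) hlarge
      _ = ‖Gamma (z - n)‖ := by
          rw [← norm_mul, ← Gamma_add_one _ hne]
          push_cast
          ring_nf
  have htail : ∀ k, ‖Gamma (z - (K + k : ℕ))‖ ≤ ‖Gamma (z - K)‖ := by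
    intro k
    induction k with
    | zero => simp
    | succ k ih => exact (hstep (K + k) (Nat.le_add_right _ _)).trans ih
  refine ⟨∑ k ∈ range (K + 1), ‖Gamma (z - k)‖, fun n => ?_⟩
  have hle : ∀ k ≤ K, ‖Gamma (z - k)‖ ≤ ∑ k ∈ range (K + 1), ‖Gamma (z - k)‖ := fun k hk =>
    single_le_sum (f := fun k : ℕ => ‖Gamma (z - k)‖) (fun _ _ => norm_nonneg _)
      (mem_range.2 (Nat.lt_succ_of_le hk))
  rcases le_or_gt n K with hn | hn
  · exact hle n hn
  · obtain ⟨k, rfl⟩ := Nat.exists_eq_add_of_le hn.le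
    exact (htail k).trans (hle K le_rfl)

noncomputable section

namespace GammaSeries

variable {ι : Type*} [Fintype ι]

def weight (w m : ι → ℕ) : ℕ := ∑ j, w j * m j

def coeff (s : ι → ℂ) (m : ι → ℕ) : ℂ := ∏ j, s j ^ m j / ((m j).factorial : ℂ)

def term (s : ι → ℂ) (w : ι → ℕ) (u : ℂ) (m : ι → ℕ) : ℂ := coeff s m * Gamma (u - weight w m)

def series (s : ι → ℂ) (w : ι → ℕ) (u : ℂ) : ℂ := ∑' m, term s w u m

theorem weight_add_single [DecidableEq ι] (w m : ι → ℕ) (j : ι) :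
    weight w (m + (Pi.single j 1 : ι → ℕ)) = weight w m + w j := by
  simp [weight, mul_add, sum_add_distrib, Pi.single_apply]

theorem coeff_add_single [DecidableEq ι] (s : ι → ℂ) (m : ι → ℕ) (j : ι) :
    ((m j : ℂ) + 1) * coeff s (m + (Pi.single j 1 : ι → ℕ)) = s j * coeff s m := by
  have hfactor : ∀ i, s i ^ (m + (Pi.single j 1 : ι → ℕ)) i /
        (((m + (Pi.single j 1 : ι → ℕ)) i).factorial : ℂ)
      = s i ^ m i / ((m i).factorial : ℂ) * if i = j then s j / ((m j : ℂ) + 1) else 1 := by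
    intro i
    rcases eq_or_ne i j with rfl | hij
    · simp only [Pi.add_apply, Pi.single_eq_same, if_true, Nat.factorial_succ, pow_succ]
      push_cast
      field_simp
    · simp [hij]
  have hm : (m j : ℂ) + 1 ≠ 0 := by exact_mod_cast Nat.succ_ne_zero (m j)
  rw [coeff, coeff, prod_congr rfl fun i _ => hfactor i, prod_mul_distrib, prod_ite_eq' univ j]
  simp only [mem_univ, if_true]
  field_simp

theorem norm_coeff (s : ι → ℂ) (m : ι → ℕ) :
    ‖coeff s m‖ = ∏ j, ‖s j‖ ^ m j / ((m j).factorial : ℝ) := by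
  simp [coeff, norm_prod]

theorem summable_weight_mul_norm_term (s : ι → ℂ) (w : ι → ℕ) (z : ℂ) :
    Summable fun m => ((weight w m : ℝ) + 1) * ‖term s w z m‖ := by
  obtain ⟨C, hC⟩ := exists_norm_Gamma_sub_natCast_le z
  have hprod : Summable fun m : ι → ℕ => ∏ j, (2 ^ w j * ‖s j‖) ^ m j / ((m j).factorial : ℝ) :=
    summable_pi_prod_of_nonneg (t := fun j k => (2 ^ w j * ‖s j‖) ^ k / (k.factorial : ℝ))
      (fun j k => by positivity)
      fun j => Real.summable_pow_div_factorial _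
  refine (hprod.mul_left C).of_nonneg_of_le (fun m => by positivity) fun m => ?_
  -- `weight w m + 1 ≤ 2 ^ weight w m = ∏ j, (2 ^ w j) ^ m j` goes into the exponential series.
  have hpow : (weight w m : ℝ) + 1 ≤ ∏ j, ((2 : ℝ) ^ w j) ^ m j := by
    rw [prod_congr rfl fun j _ => (pow_mul (2 : ℝ) (w j) (m j)).symm, prod_pow_eq_pow_sum]
    exact_mod_cast (Nat.lt_two_pow_self (n := weight w m))
  calc ((weight w m : ℝ) + 1) * ‖term s w z m‖
      = ((weight w m : ℝ) + 1) * ‖coeff s m‖ * ‖Gamma (z - weight w m)‖ := by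
        rw [term, norm_mul, mul_assoc]
    _ ≤ (∏ j, ((2 : ℝ) ^ w j) ^ m j) * ‖coeff s m‖ * C := by
        gcongr
        exact hC _
    _ = C * ∏ j, (2 ^ w j * ‖s j‖) ^ m j / ((m j).factorial : ℝ) := by
        rw [norm_coeff, mul_comm, ← prod_mul_distrib]
        simp_rw [mul_pow, mul_div_assoc]

theorem summable_natCast_mul_term (s : ι → ℂ) (w : ι → ℕ) (z : ℂ) {k : (ι → ℕ) → ℕ}
    (hk : ∀ m, k m ≤ weight w m + 1) : Summable fun m => (k m : ℂ) * term s w z m :=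
  (summable_weight_mul_norm_term s w z).of_norm_bounded fun m => by
    rw [norm_mul, Complex.norm_natCast]
    gcongr
    exact_mod_cast hk m

theorem series_add_one (s : ι → ℂ) (w : ι → ℕ) {z : ℂ} (hz : ∀ n : ℕ, z ≠ n) :
    series s w (z + 1) = ∑' m, (z - weight w m) * term s w z m := by
  refine tsum_congr fun m => ?_
  have hne : z - weight w m ≠ 0 := sub_ne_zero.2 (hz _)
  rw [term, term, add_sub_right_comm, Gamma_add_one _ hne]
  ring

theorem natCast_mul_mul_series_sub [DecidableEq ι] (s : ι → ℂ) (w : ι → ℕ) (z : ℂ) (j : ι) :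
    (w j : ℂ) * s j * series s w (z - w j) = ∑' m, ((w j * m j : ℕ) : ℂ) * term s w z m := by
  rw [← tsum_comp_add_single _ j fun m hm => by simp [hm], series, ← tsum_mul_left]
  refine tsum_congr fun m => ?_
  have hshift : z - w j - weight w m = z - weight w (m + Pi.single j 1) := by
    rw [weight_add_single]
    push_cast
    ring
  rw [term, term, hshift, ← mul_assoc, mul_assoc _ (s j), ← coeff_add_single]
  simp only [Pi.add_apply, Pi.single_eq_same, Nat.cast_mul, Nat.cast_add, Nat.cast_one]
  ring

theorem series_add_one_add_sum (s : ι → ℂ) (w : ι → ℕ) {z : ℂ} (hz : ∀ n : ℕ, z ≠ n) :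
    series s w (z + 1) + ∑ j, (w j : ℂ) * s j * series s w (z - w j) = z * series s w z := by
  classical
  have hweight : ∀ m, ∑ j, ((w j * m j : ℕ) : ℂ) * term s w z m = weight w m * term s w z m := by
    intro m
    rw [← sum_mul, weight]
    push_cast
    rfl
  have hterm : Summable (term s w z) := by
    simpa using summable_natCast_mul_term s w z (k := fun _ => 1) fun m => Nat.le_add_left _ _
  have hweighted := summable_natCast_mul_term s w z (k := weight w) fun m => Nat.le_succ _
  have hshifted : Summable fun m => (z - weight w m) * term s w z m :=
    ((hterm.mul_left z).sub hweighted).congr fun m => by ring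
  have hcomponent : ∀ j, Summable fun m => ((w j * m j : ℕ) : ℂ) * term s w z m :=
    fun j => summable_natCast_mul_term s w z fun m =>
      (single_le_sum (f := fun i => w i * m i) (fun _ _ => Nat.zero_le _) (mem_univ j)).trans
        (Nat.le_succ _)
  calc series s w (z + 1) + ∑ j, (w j : ℂ) * s j * series s w (z - w j)
      = ∑' m, (z - weight w m) * term s w z m + ∑' m, (weight w m : ℂ) * term s w z m := by
        rw [series_add_one s w hz, sum_congr rfl fun j _ => natCast_mul_mul_series_sub s w z j,
          ← Summable.tsum_finsetSum fun j _ => hcomponent j, tsum_congr hweight]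
    _ = z * series s w z := by
        rw [← hshifted.tsum_add hweighted, series, ← tsum_mul_left]
        exact tsum_congr fun m => by ring

end GammaSeries

end

/-- Quantum spectral curve of the stationary GW theory of P¹ relative to one point:
for `F(w) = Σ_m (∏_j s_j^{m_j}/m_j!) Γ(w − Σ_j j·m_j)` one has
`F(z+1) + Σ_{j=1}^r j·s_j·F(z−j) = z·F(z)`. -/
theorem stmt14 (r : ℕ) (s : Fin r → ℂ)
    (F : ℂ → ℂ)
    (hF : ∀ w : ℂ, (∀ m : ℤ, w ≠ (m : ℂ)) →
      F w = ∑' m : Fin r → ℕ,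
        (∏ j, s j ^ m j / ((m j).factorial : ℂ)) *
          Complex.Gamma (w - ((∑ j, (j.val + 1) * m j : ℕ) : ℂ)))
    (z : ℂ) (hz : ∀ m : ℤ, z ≠ (m : ℂ)) :
    F (z + 1) + (∑ j : Fin r, ((j.val + 1 : ℕ) : ℂ) * s j * F (z - ((j.val + 1 : ℕ) : ℂ)))
      = z * F z := by
  have hseries : ∀ u : ℂ, (∀ m : ℤ, u ≠ m) → F u = GammaSeries.series s (fun j => j.val + 1) u :=
    fun u hu => hF u hu
  have hz_add_one : ∀ m : ℤ, z + 1 ≠ m := fun m h => hz (m - 1) (by push_cast; linear_combination h)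
  have hz_sub : ∀ (n : ℕ) (m : ℤ), z - n ≠ m :=
    fun n m h => hz (m + n) (by push_cast; linear_combination h)
  rw [hseries _ hz_add_one, hseries z hz, sum_congr rfl fun j _ => by rw [hseries _ (hz_sub _)]]
  exact GammaSeries.series_add_one_add_sum s _ fun n => by exact_mod_cast hz n
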